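/- arXiv:1412.3417 — 6 statements merged into one kernel-verified Lean document; each statement's English description precedes it below -/
import Mathlib

section
/- Let (M,b) be a non-singular symmetric quadratic object in a k-linear rigid braided monoidal category C. Then M is weakly symmetric, i.e., ev_M = ev_M ∘ c_{M,M*} ∘ c_{M*,M}. -/
open CategoryTheory CategoryTheory.MonoidalCategory

/-- If `(M,b)` is a non-singular symmetric quadratic object in a `k`-linear rigid braided
monoidal category (i.e. `b ∘ c_{M,M} = b` and the morphism `h : M ⟶ Mᘁ` induced by `b`
under the duality adjunction is an isomorphism), then `M` is weakly symmetric: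
`ev_M = ev_M ∘ c_{M,Mᘁ} ∘ c_{Mᘁ,M}`. -/
theorem stmt3 (k : Type*) [CommRing k] [Invertible (2 : k)]
    (C : Type*) [Category C] [MonoidalCategory C] [BraidedCategory C]
    [RightRigidCategory C] [Preadditive C] [Linear k C]
    (M : C) (b : M ⊗ M ⟶ 𝟙_ C)
    (hsymm : (β_ M M).hom ≫ b = b)
    (h : M ⟶ Mᘁ) (hhb : (h ▷ M) ≫ ε_ M (Mᘁ) = b) [IsIso h] :
    ε_ M (Mᘁ) = (β_ (Mᘁ) M).hom ≫ (β_ M (Mᘁ)).hom ≫ ε_ M (Mᘁ) := by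
  rw [← cancel_epi (h ▷ M), hhb, BraidedCategory.braiding_naturality_left_assoc,
    BraidedCategory.braiding_naturality_right_assoc, hhb, hsymm, hsymm]
end

section
/- Let (M,b) be a non-singular symmetric quadratic object in a k-linear rigid braided monoidal category C, where 2 is invertible in k. Then (M,b) ⊥ (M,-b) is isometric to the hyperbolic object H(M) = (M ⊕ M*, b_M). -/
/-!
Write `½ = ⅟2` and let `h : M ⟶ Mᘁ` be the isomorphism adjoint to `b`. The two copies of `M` are sent to the
graphs of `½ h` and `-½ h` in `M ⊞ Mᘁ`. The hyperbolic form on `(x, s h x) ⊗ (y, t h y)` is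
`s b(x, y) + t b(y, x) = (s + t) b(x, y)` by symmetry of `b`, so it restricts to `b` and `-b` on the
two graphs and vanishes across them. The map is invertible with inverse
`(m, φ) ↦ (½ m + h⁻¹ φ, ½ m - h⁻¹ φ)`; this is where `2` being invertible is used.
-/

open CategoryTheory CategoryTheory.MonoidalCategory CategoryTheory.Limits

namespace CategoryTheory.Limits

variable (k : Type*) [CommRing k] [Invertible (2 : k)] {C : Type*} [Category C] [Preadditive C]
  [Linear k C] [HasBinaryBiproducts C]

@[simps]
noncomputable def biprodGraphIso {M N : C} (h : M ⟶ N) [IsIso h] : M ⊞ M ≅ M ⊞ N where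
  hom := biprod.desc (biprod.lift (𝟙 M) ((⅟2 : k) • h)) (biprod.lift (𝟙 M) ((-⅟2 : k) • h))
  inv := biprod.desc (biprod.lift ((⅟2 : k) • 𝟙 M) ((⅟2 : k) • 𝟙 M)) (biprod.lift (inv h) (-inv h))
  hom_inv_id := by ext <;> simp [Linear.smul_comp, ← add_smul, invOf_two_add_invOf_two]
  inv_hom_id := by ext <;> simp [Linear.smul_comp, ← add_smul, invOf_two_add_invOf_two]

end CategoryTheory.Limits

namespace CategoryTheory.MonoidalCategory

section Biproducts

variable {C : Type*} [Category C] [MonoidalCategory C] [Preadditive C] [MonoidalPreadditive C]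
  [HasBinaryBiproducts C]

theorem biprod_whiskerRight_hom_ext {X Y Z T : C} {f g : (X ⊞ Y) ⊗ Z ⟶ T}
    (hl : biprod.inl ▷ Z ≫ f = biprod.inl ▷ Z ≫ g)
    (hr : biprod.inr ▷ Z ≫ f = biprod.inr ▷ Z ≫ g) : f = g := by
  rw [← Category.id_comp f, ← Category.id_comp g, ← id_whiskerRight, ← biprod.total,
    MonoidalPreadditive.add_whiskerRight, comp_whiskerRight, comp_whiskerRight,
    Preadditive.add_comp, Preadditive.add_comp, Category.assoc, Category.assoc, Category.assoc,
    Category.assoc, hl, hr]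

theorem biprod_whiskerLeft_hom_ext {X Y Z T : C} {f g : X ⊗ (Y ⊞ Z) ⟶ T}
    (hl : X ◁ biprod.inl ≫ f = X ◁ biprod.inl ≫ g)
    (hr : X ◁ biprod.inr ≫ f = X ◁ biprod.inr ≫ g) : f = g := by
  rw [← Category.id_comp f, ← Category.id_comp g, ← whiskerLeft_id, ← biprod.total,
    MonoidalPreadditive.whiskerLeft_add, whiskerLeft_comp, whiskerLeft_comp,
    Preadditive.add_comp, Preadditive.add_comp, Category.assoc, Category.assoc, Category.assoc,
    Category.assoc, hl, hr]

theorem biprod_tensor_biprod_hom_ext {W X Y Z T : C} {f g : (W ⊞ X) ⊗ (Y ⊞ Z) ⟶ T}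
    (hll : (biprod.inl ⊗ₘ biprod.inl) ≫ f = (biprod.inl ⊗ₘ biprod.inl) ≫ g)
    (hlr : (biprod.inl ⊗ₘ biprod.inr) ≫ f = (biprod.inl ⊗ₘ biprod.inr) ≫ g)
    (hrl : (biprod.inr ⊗ₘ biprod.inl) ≫ f = (biprod.inr ⊗ₘ biprod.inl) ≫ g)
    (hrr : (biprod.inr ⊗ₘ biprod.inr) ≫ f = (biprod.inr ⊗ₘ biprod.inr) ≫ g) : f = g := by
  simp only [tensorHom_def', Category.assoc] at hll hlr hrl hrr
  apply biprod_whiskerRight_hom_ext <;> apply biprod_whiskerLeft_hom_ext <;> assumption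

end Biproducts

section Linear

variable {k : Type*} [CommRing k] {C : Type*} [Category C] [MonoidalCategory C] [Preadditive C]
  [MonoidalPreadditive C] [Linear k C] [MonoidalLinear k C]

theorem smul_tensorHom {W X Y Z : C} (r : k) (f : W ⟶ X) (g : Y ⟶ Z) :
    (r • f) ⊗ₘ g = r • (f ⊗ₘ g) := by
  rw [tensorHom_def, tensorHom_def, MonoidalLinear.smul_whiskerRight, Linear.smul_comp]

theorem tensorHom_smul {W X Y Z : C} (r : k) (f : W ⟶ X) (g : Y ⟶ Z) :
    f ⊗ₘ (r • g) = r • (f ⊗ₘ g) := by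
  rw [tensorHom_def, tensorHom_def, MonoidalLinear.whiskerLeft_smul, Linear.comp_smul]

end Linear

section Quadratic

variable {C : Type*} [Category C] [MonoidalCategory C] [BraidedCategory C] {M : C} [HasRightDual M]

theorem whiskerLeft_comp_braiding_comp_ev {b : M ⊗ M ⟶ 𝟙_ C} (hsymm : (β_ M M).hom ≫ b = b)
    {h : M ⟶ Mᘁ} (hhb : h ▷ M ≫ ε_ M (Mᘁ) = b) :
    M ◁ h ≫ (β_ M (Mᘁ)).hom ≫ ε_ M (Mᘁ) = b := by
  rw [BraidedCategory.braiding_naturality_right_assoc, hhb, hsymm]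

variable [Preadditive C] [MonoidalPreadditive C] [HasBinaryBiproducts C]
  {bH : (M ⊞ Mᘁ) ⊗ (M ⊞ Mᘁ) ⟶ 𝟙_ C}
  (hH1 : (biprod.inl ⊗ₘ biprod.inl : M ⊗ M ⟶ (M ⊞ Mᘁ) ⊗ (M ⊞ Mᘁ)) ≫ bH = 0)
  (hH2 : (biprod.inr ⊗ₘ biprod.inr : Mᘁ ⊗ Mᘁ ⟶ (M ⊞ Mᘁ) ⊗ (M ⊞ Mᘁ)) ≫ bH = 0)
  (hH3 : (biprod.inr ⊗ₘ biprod.inl : Mᘁ ⊗ M ⟶ (M ⊞ Mᘁ) ⊗ (M ⊞ Mᘁ)) ≫ bH = ε_ M (Mᘁ))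
  (hH4 : (biprod.inl ⊗ₘ biprod.inr : M ⊗ Mᘁ ⟶ (M ⊞ Mᘁ) ⊗ (M ⊞ Mᘁ)) ≫ bH
    = (β_ M (Mᘁ)).hom ≫ ε_ M (Mᘁ))
include hH1 hH2 hH3 hH4

theorem lift_tensor_lift_comp_hyperbolic {A B : C} (x : A ⟶ M) (u : A ⟶ Mᘁ) (y : B ⟶ M)
    (v : B ⟶ Mᘁ) :
    (biprod.lift x u ⊗ₘ biprod.lift y v) ≫ bH
      = (u ⊗ₘ y) ≫ ε_ M (Mᘁ) + (x ⊗ₘ v) ≫ (β_ M (Mᘁ)).hom ≫ ε_ M (Mᘁ) := by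
  simp only [biprod.lift_eq, MonoidalPreadditive.add_tensor, MonoidalPreadditive.tensor_add,
    Preadditive.add_comp, ← tensorHom_comp_tensorHom, Category.assoc, hH1, hH2, hH3, hH4,
    Limits.comp_zero, add_zero, zero_add]

theorem graph_tensor_graph_comp_hyperbolic {k : Type*} [CommRing k] [Linear k C]
    [MonoidalLinear k C] {b : M ⊗ M ⟶ 𝟙_ C} (hsymm : (β_ M M).hom ≫ b = b) {h : M ⟶ Mᘁ}
    (hhb : h ▷ M ≫ ε_ M (Mᘁ) = b) (s t : k) :
    (biprod.lift (𝟙 M) (s • h) ⊗ₘ biprod.lift (𝟙 M) (t • h)) ≫ bH = (s + t) • b := by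
  rw [lift_tensor_lift_comp_hyperbolic hH1 hH2 hH3 hH4, smul_tensorHom, tensorHom_smul,
    Linear.smul_comp, Linear.smul_comp, tensorHom_id, id_tensorHom, hhb,
    whiskerLeft_comp_braiding_comp_ev hsymm hhb, add_smul]

end Quadratic

end CategoryTheory.MonoidalCategory

/-- Let `(M,b)` be a non-singular symmetric quadratic object in a `k`-linear rigid braided
monoidal additive category `C`, with `2` invertible in `k`. Then the orthogonal sum
`(M,b) ⊥ (M,-b)` is isometric to the hyperbolic object `H(M) = (M ⊕ Mᘁ, b_M)`, where
`b_M` vanishes on `M ⊗ M` and `Mᘁ ⊗ Mᘁ`, equals `ev_M` on `Mᘁ ⊗ M` and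
`ev_M ∘ c_{M,Mᘁ}` on `M ⊗ Mᘁ`. -/
theorem stmt4 (k : Type*) [CommRing k] [Invertible (2 : k)]
    (C : Type*) [Category C] [MonoidalCategory C] [BraidedCategory C]
    [RightRigidCategory C] [Preadditive C] [Linear k C]
    [MonoidalPreadditive C] [MonoidalLinear k C] [HasBinaryBiproducts C]
    (M : C) (b : M ⊗ M ⟶ 𝟙_ C)
    (hsymm : (β_ M M).hom ≫ b = b)
    (h : M ⟶ Mᘁ) (hhb : (h ▷ M) ≫ ε_ M (Mᘁ) = b) [IsIso h]
    -- the hyperbolic form `b_M` on `M ⊞ Mᘁ`: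
    (bH : (M ⊞ Mᘁ) ⊗ (M ⊞ Mᘁ) ⟶ 𝟙_ C)
    (hH1 : (biprod.inl ⊗ₘ biprod.inl : M ⊗ M ⟶ (M ⊞ Mᘁ) ⊗ (M ⊞ Mᘁ)) ≫ bH = 0)
    (hH2 : (biprod.inr ⊗ₘ biprod.inr : Mᘁ ⊗ Mᘁ ⟶ (M ⊞ Mᘁ) ⊗ (M ⊞ Mᘁ)) ≫ bH = 0)
    (hH3 : (biprod.inr ⊗ₘ biprod.inl : Mᘁ ⊗ M ⟶ (M ⊞ Mᘁ) ⊗ (M ⊞ Mᘁ)) ≫ bH = ε_ M (Mᘁ))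
    (hH4 : (biprod.inl ⊗ₘ biprod.inr : M ⊗ Mᘁ ⟶ (M ⊞ Mᘁ) ⊗ (M ⊞ Mᘁ)) ≫ bH
      = (β_ M (Mᘁ)).hom ≫ ε_ M (Mᘁ))
    -- the orthogonal sum form of `(M,b)` and `(M,-b)` on `M ⊞ M`:
    (bO : (M ⊞ M) ⊗ (M ⊞ M) ⟶ 𝟙_ C)
    (hO1 : (biprod.inl ⊗ₘ biprod.inl : M ⊗ M ⟶ (M ⊞ M) ⊗ (M ⊞ M)) ≫ bO = b)
    (hO2 : (biprod.inr ⊗ₘ biprod.inr : M ⊗ M ⟶ (M ⊞ M) ⊗ (M ⊞ M)) ≫ bO = -b)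
    (hO3 : (biprod.inl ⊗ₘ biprod.inr : M ⊗ M ⟶ (M ⊞ M) ⊗ (M ⊞ M)) ≫ bO = 0)
    (hO4 : (biprod.inr ⊗ₘ biprod.inl : M ⊗ M ⟶ (M ⊞ M) ⊗ (M ⊞ M)) ≫ bO = 0) :
    ∃ f : (M ⊞ M) ≅ (M ⊞ Mᘁ), (f.hom ⊗ₘ f.hom) ≫ bH = bO := by
  have graph := graph_tensor_graph_comp_hyperbolic (k := k) hH1 hH2 hH3 hH4 hsymm hhb
  refine ⟨biprodGraphIso k h, biprod_tensor_biprod_hom_ext ?_ ?_ ?_ ?_⟩ <;>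
    simp only [← Category.assoc, tensorHom_comp_tensorHom, biprodGraphIso_hom, biprod.inl_desc,
      biprod.inr_desc, graph, hO1, hO2, hO3, hO4]
  · rw [invOf_two_add_invOf_two, one_smul]
  · rw [add_neg_cancel, zero_smul]
  · rw [neg_add_cancel, zero_smul]
  · rw [← neg_add, invOf_two_add_invOf_two, neg_one_smul]
end

section
/- In a semisimple k-linear rigid category over an algebraically closed field, the duality involution on isomorphism classes of simple objects satisfies i** = i, i.e., (X*)* ≅ X for every simple object X. -/
open CategoryTheory CategoryTheory.MonoidalCategory

section Stmt6Aux

open CategoryTheory.Limits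

variable {k : Type*} [Field k]
variable {C : Type*} [Category C] [Preadditive C] [Linear k C]
  [MonoidalCategory C] [MonoidalPreadditive C] [MonoidalLinear k C]

/-- `tensorLeftHomEquiv` as a `k`-linear equivalence. -/
noncomputable def stmt6_tlhe (X Y Y' Z : C) [ExactPairing Y Y'] :
    (Y' ⊗ X ⟶ Z) ≃ₗ[k] (X ⟶ Y ⊗ Z) :=
  { tensorLeftHomEquiv X Y Y' Z with
    map_add' := fun f g => by simp [tensorLeftHomEquiv]
    map_smul' := fun c f => by simp [tensorLeftHomEquiv] }

/-- `tensorRightHomEquiv` as a `k`-linear equivalence. -/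
noncomputable def stmt6_trhe (X Y Y' Z : C) [ExactPairing Y Y'] :
    (X ⊗ Y ⟶ Z) ≃ₗ[k] (X ⟶ Z ⊗ Y') :=
  { tensorRightHomEquiv X Y Y' Z with
    map_add' := fun f g => by simp [tensorRightHomEquiv]
    map_smul' := fun c f => by simp [tensorRightHomEquiv] }

lemma stmt6_finrank_end_eq (Y Y' : C) [ExactPairing Y Y'] :
    Module.finrank k (Y' ⟶ Y') = Module.finrank k (Y ⟶ Y) := by
  have e1 : (Y' ⟶ Y') ≃ₗ[k] (𝟙_ C ⟶ Y ⊗ Y') :=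
    (Linear.homCongr k (ρ_ Y').symm (Iso.refl Y')).trans (stmt6_tlhe (𝟙_ C) Y Y' Y')
  have e2 : (Y ⟶ Y) ≃ₗ[k] (𝟙_ C ⟶ Y ⊗ Y') :=
    (Linear.homCongr k (λ_ Y).symm (Iso.refl Y)).trans (stmt6_trhe (𝟙_ C) Y Y' Y)
  rw [e1.finrank_eq, e2.finrank_eq]

theorem stmt6_aux (k : Type*) [Field k] [IsAlgClosed k]
    (C : Type*) [Category C] [Preadditive C] [Linear k C]
    [MonoidalCategory C] [MonoidalPreadditive C] [MonoidalLinear k C]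
    [RightRigidCategory C] [HasKernels C]
    [Simple (𝟙_ C)]
    (hsplit : ∀ {A B : C} (f : A ⟶ B), Mono f → ∃ r : B ⟶ A, f ≫ r = 𝟙 A)
    (hfin : ∀ X Y : C, FiniteDimensional k (X ⟶ Y))
    (X : C) (hX : Simple X) : Nonempty (X ≅ (Xᘁ)ᘁ) := by
  haveI := hX
  haveI := hfin X X
  -- Schur: End X is one-dimensional
  have hrX : Module.finrank k (X ⟶ X) = 1 := finrank_endomorphism_simple_eq_one k X
  have hrX' : Module.finrank k ((Xᘁ) ⟶ (Xᘁ)) = 1 :=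
    (stmt6_finrank_end_eq (k := k) X (Xᘁ)).trans hrX
  have hrX'' : Module.finrank k (((Xᘁ)ᘁ) ⟶ ((Xᘁ)ᘁ)) = 1 :=
    (stmt6_finrank_end_eq (k := k) (Xᘁ) ((Xᘁ)ᘁ)).trans hrX'
  -- the identity of `Xᘁ` is nonzero
  have hid' : (𝟙 (Xᘁ)) ≠ 0 := by
    intro h
    have hsub : Subsingleton ((Xᘁ) ⟶ (Xᘁ)) := by
      constructor
      intro a b
      calc a = a ≫ 𝟙 (Xᘁ) := by simp
        _ = b ≫ 𝟙 (Xᘁ) := by rw [h]; simp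
        _ = b := by simp
    rw [Module.finrank_zero_of_subsingleton] at hrX'
    exact one_ne_zero hrX'.symm
  -- the coevaluation of `X` is nonzero
  have hη : (η_ X (Xᘁ)) ≠ 0 := by
    intro h
    have h1 := tensorLeftHomEquiv_symm_coevaluation_comp_whiskerLeft (Y := X) (𝟙 (Xᘁ))
    rw [MonoidalCategory.whiskerLeft_id, Category.comp_id, Category.comp_id, h] at h1
    have h0 : ((tensorLeftHomEquiv (𝟙_ C) X (Xᘁ) (Xᘁ)).symm 0) = 0 := by
      simp [tensorLeftHomEquiv]
    rw [h0] at h1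
    apply hid'
    rw [← (ρ_ (Xᘁ)).inv_hom_id, ← h1, comp_zero]
  -- split the coevaluation
  have hmη : Mono (η_ X (Xᘁ)) := mono_of_nonzero_from_simple hη
  obtain ⟨p, hp⟩ := hsplit _ hmη
  have hpne : p ≠ 0 := by
    intro h
    apply id_nonzero (𝟙_ C)
    rw [← hp, h, comp_zero]
  -- the canonical nonzero map `X ⟶ Xᘁᘁ`
  let E : (X ⊗ (Xᘁ) ⟶ 𝟙_ C) ≃ₗ[k] (X ⟶ (Xᘁ)ᘁ) :=
    (stmt6_trhe X (Xᘁ) ((Xᘁ)ᘁ) (𝟙_ C)).trans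
      (Linear.homCongr k (Iso.refl X) (λ_ ((Xᘁ)ᘁ)))
  let f : X ⟶ (Xᘁ)ᘁ := E p
  have hfne : f ≠ 0 := by
    intro h
    exact hpne (by simpa [f] using (E.map_eq_zero_iff).mp h)
  have hmf : Mono f := mono_of_nonzero_from_simple hfne
  obtain ⟨r, hfr⟩ := hsplit f hmf
  -- the identity of `Xᘁᘁ` is nonzero
  have hid'' : (𝟙 ((Xᘁ)ᘁ)) ≠ 0 := by
    intro h
    apply id_nonzero X
    rw [← hfr, ← Category.comp_id f, Category.assoc, h, zero_comp, comp_zero]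
  -- `r ≫ f` is a scalar multiple of the identity
  obtain ⟨c, hc⟩ := (finrank_eq_one_iff_of_nonzero' (𝟙 ((Xᘁ)ᘁ)) hid'').mp hrX'' (r ≫ f)
  have hcomp : f ≫ (r ≫ f) ≫ r = 𝟙 X := by
    rw [← Category.assoc, ← Category.assoc, hfr, Category.id_comp, hfr]
  rw [← hc] at hcomp
  have hc1 : c • 𝟙 X = 𝟙 X := by
    conv_rhs => rw [← hcomp]
    simp [hfr]
  have hcval : c = 1 := by
    have h2 : (c - 1) • 𝟙 X = 0 := by rw [sub_smul, one_smul, hc1, sub_self]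
    rcases smul_eq_zero.mp h2 with h | h
    · exact sub_eq_zero.mp h
    · exact absurd h (id_nonzero X)
  have hrf : r ≫ f = 𝟙 ((Xᘁ)ᘁ) := by
    rw [← hc, hcval, one_smul]
  exact ⟨⟨f, r, hfr, hrf⟩⟩

/-- In an abelian category in which every object is projective, every mono splits. -/
lemma stmt6_split {D : Type*} [Category D] [Abelian D] (hss : ∀ Z : D, Projective Z)
    {A B : D} (f : A ⟶ B) (hf : Mono f) : ∃ r : B ⟶ A, f ≫ r = 𝟙 A := by
  haveI := hf
  haveI := hss (cokernel f)
  let s : cokernel f ⟶ B := Projective.factorThru (𝟙 _) (cokernel.π f)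
  have hs : s ≫ cokernel.π f = 𝟙 _ := Projective.factorThru_comp _ _
  have hg : (𝟙 B - cokernel.π f ≫ s) ≫ cokernel.π f = 0 := by
    simp [Preadditive.sub_comp, Category.assoc, hs]
  refine ⟨Abelian.monoLift f _ hg, ?_⟩
  have h2 : Abelian.monoLift f _ hg ≫ f = 𝟙 B - cokernel.π f ≫ s :=
    Abelian.monoLift_comp f _ hg
  rw [← cancel_mono f, Category.assoc, h2]
  simp [Preadditive.comp_sub, cokernel.condition_assoc]

end Stmt6Aux

/-- In a semisimple `k`-linear rigid monoidal category over an algebraically closed field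
`k` of characteristic zero (with simple tensor unit and finite-dimensional hom spaces;
semisimplicity is encoded by every object being projective), the duality involution on
simple objects satisfies `i** = i`: `(X*)* ≅ X` for every simple object `X`. -/
theorem stmt6 (k : Type*) [Field k] [IsAlgClosed k] [CharZero k]
    (C : Type*) [Category C] [Abelian C] [Preadditive C] [Linear k C]
    [MonoidalCategory C] [MonoidalPreadditive C] [MonoidalLinear k C]
    [RightRigidCategory C]
    [Simple (𝟙_ C)]
    (hfin : ∀ X Y : C, FiniteDimensional k (X ⟶ Y))
    (hss : ∀ X : C, Projective X)
    (X : C) (hX : Simple X) : Nonempty (X ≅ (Xᘁ)ᘁ) := by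
  haveI hk : Limits.HasKernels C := by
    have h := Limits.HasZeroMorphisms.ext
      (@Preadditive.preadditiveHasZeroMorphisms C _ ‹Preadditive C›)
      (@Preadditive.preadditiveHasZeroMorphisms C _ Abelian.toPreadditive)
    show @Limits.HasKernels C _ (@Preadditive.preadditiveHasZeroMorphisms C _ ‹Preadditive C›)
    rw [h]
    infer_instance
  exact stmt6_aux k C (fun {A B} f hf => stmt6_split hss f hf) hfin X hX
end

section
/- Let G₂ = ⟨a,b,c | a⁴ = b⁴ = c² = 1, [a,b] = 1, [c,a] = a², [c,b] = b²⟩ ≅ ℤ₂ ⋉ (ℤ₄)². Every normal abelian subgroup of G₂ of order 4 is contained in ⟨a,b⟩, and the only normal subgroup of G₂ isomorphic to ℤ₂ × ℤ₂ is the central subgroup ⟨a², b²⟩. -/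
/-!
Since `c` inverts `a` and `b`, every element of `G` is a word `a ^ i * b ^ j * c ^ k`, and as
`|G| = 32` these words with `i, j ∈ ℤ/4` and `k ∈ ℤ/2` are pairwise distinct. An element
`x = a ^ i * b ^ j * c` also inverts `a` and `b`, so the commutators `[a, x] = a²` and
`[b, x] = b²` lie in every normal subgroup containing `x`; such a subgroup then contains the five
distinct elements `x, 1, a², b², a²b²`, hence cannot have order 4. A normal Klein
four-group therefore lies in `⟨a, b⟩ ≅ ℤ/4 × ℤ/4`, whose involutions together with `1` form
`⟨a², b²⟩`.
-/

open Subgroup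

section NormalForm

variable {G : Type*} [Group G] {a b c : G}

lemma semiconjBy_inv_of_inv_mul_inv_mul_mul_eq_sq (h : c⁻¹ * a⁻¹ * c * a = a ^ 2) :
    SemiconjBy c a a⁻¹ :=
  calc c * a = c * (a ^ 2 * a⁻¹) := by group
    _ = a⁻¹ * c := by rw [← h]; group

lemma SemiconjBy.mul_zpow_mul_zpow {g : G} (hga : SemiconjBy g a a⁻¹)
    (hgb : SemiconjBy g b b⁻¹) (i j : ℤ) : g * (a ^ i * b ^ j) = a ^ (-i) * b ^ (-j) * g := by
  rw [zpow_neg, zpow_neg, ← inv_zpow, ← inv_zpow]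
  exact ((hga.zpow_right i).mul_right (hgb.zpow_right j)).eq

theorem exists_zpow_mul_zpow_mul_zpow_eq (hab : Commute a b) (hca : SemiconjBy c a a⁻¹)
    (hcb : SemiconjBy c b b⁻¹) (hgen : closure {a, b, c} = ⊤) (x : G) :
    ∃ i j k : ℤ, a ^ i * b ^ j * c ^ k = x := by
  have hca' : SemiconjBy c⁻¹ a a⁻¹ := by simpa using hca.inv_right.inv_symm_left
  have hcb' : SemiconjBy c⁻¹ b b⁻¹ := by simpa using hcb.inv_right.inv_symm_left
  induction (hgen ▸ mem_top x : x ∈ closure {a, b, c}) using closure_induction_left with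
  | one => exact ⟨0, 0, 0, by simp⟩
  | mul_left s hs _ _ ih =>
    obtain ⟨i, j, k, rfl⟩ := ih
    rcases hs with rfl | rfl | rfl
    · exact ⟨i + 1, j, k, by group⟩
    · refine ⟨i, j + 1, k, ?_⟩
      rw [← mul_assoc, ← mul_assoc, (hab.symm.zpow_right i).eq]
      group
    · refine ⟨-i, -j, k + 1, ?_⟩
      rw [← mul_assoc s, hca.mul_zpow_mul_zpow hcb]
      group
  | inv_mul_cancel s hs _ _ ih =>
    obtain ⟨i, j, k, rfl⟩ := ih
    rcases hs with rfl | rfl | rfl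
    · exact ⟨i - 1, j, k, by group⟩
    · refine ⟨i, j - 1, k, ?_⟩
      rw [← mul_assoc, ← mul_assoc, (hab.symm.inv_left.zpow_right i).eq]
      group
    · refine ⟨-i, -j, k - 1, ?_⟩
      rw [← mul_assoc s⁻¹, hca'.mul_zpow_mul_zpow hcb']
      group

lemma sq_mem_of_semiconjBy_inv {H : Subgroup G} (hH : H.Normal) {x y : G} (hx : x ∈ H)
    (hxy : SemiconjBy x y y⁻¹) : y ^ 2 ∈ H := by
  have hxy' : x * y⁻¹ = y * x := by simpa using hxy.inv_right.eq
  have hcomm : y ^ 2 = y * x * y⁻¹ * x⁻¹ := by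
    rw [mul_assoc y, hxy', sq]
    group
  rw [hcomm]
  exact mul_mem (hH.conj_mem x hx y) (inv_mem hx)

end NormalForm

section PowWord

variable {G : Type*} [Group G] {m n l : ℕ}

def powWord (a b c : G) (p : ZMod m × ZMod n × ZMod l) : G :=
  a ^ p.1.val * b ^ p.2.1.val * c ^ p.2.2.val

variable {a b c : G}

lemma zpow_eq_pow_val_intCast [NeZero m] {x : G} (hx : x ^ m = 1) (i : ℤ) :
    x ^ i = x ^ (i : ZMod m).val := by
  rw [zpow_eq_zpow_emod' i hx, ← ZMod.val_intCast, zpow_natCast]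

lemma pow_val_add [NeZero m] {x : G} (hx : x ^ m = 1) (i j : ZMod m) :
    x ^ (i + j).val = x ^ i.val * x ^ j.val := by
  rw [ZMod.val_add, ← pow_eq_pow_mod _ hx, pow_add]

lemma powWord_surjective [NeZero m] [NeZero n] [NeZero l] (ha : a ^ m = 1) (hb : b ^ n = 1)
    (hc : c ^ l = 1) (hab : Commute a b) (hca : SemiconjBy c a a⁻¹) (hcb : SemiconjBy c b b⁻¹)
    (hgen : closure {a, b, c} = ⊤) :
    Function.Surjective (powWord a b c : ZMod m × ZMod n × ZMod l → G) := by
  intro x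
  obtain ⟨i, j, k, rfl⟩ := exists_zpow_mul_zpow_mul_zpow_eq hab hca hcb hgen x
  exact ⟨(i, j, k), by simp only [powWord, ← zpow_eq_pow_val_intCast ha,
    ← zpow_eq_pow_val_intCast hb, ← zpow_eq_pow_val_intCast hc]⟩

lemma powWord_bijective [NeZero m] [NeZero n] [NeZero l] (ha : a ^ m = 1) (hb : b ^ n = 1)
    (hc : c ^ l = 1) (hab : Commute a b) (hca : SemiconjBy c a a⁻¹) (hcb : SemiconjBy c b b⁻¹)
    (hgen : closure {a, b, c} = ⊤) (hcard : Nat.card G = m * n * l) :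
    Function.Bijective (powWord a b c : ZMod m × ZMod n × ZMod l → G) := by
  rw [Nat.bijective_iff_surjective_and_card]
  exact ⟨powWord_surjective ha hb hc hab hca hcb hgen, by simp [hcard, mul_assoc]⟩

lemma powWord_mul_powWord [NeZero m] [NeZero n] (ha : a ^ m = 1) (hb : b ^ n = 1)
    (hab : Commute a b) (i i' : ZMod m) (j j' : ZMod n) :
    powWord a b c (i, j, (0 : ZMod l)) * powWord a b c (i', j', (0 : ZMod l)) =
      powWord a b c (i + i', j + j', (0 : ZMod l)) := by
  simp only [powWord, ZMod.val_zero, pow_zero, mul_one, pow_val_add ha, pow_val_add hb, mul_assoc,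
    (hab.symm.pow_pow j.val i'.val).left_comm]

end PowWord

section OrderThirtyTwo

variable {G : Type*} [Group G] {a b c : G}

def kleinIndices : Finset (ZMod 4 × ZMod 4 × ZMod 2) :=
  {(0, 0, 0), (2, 0, 0), (0, 2, 0), (2, 2, 0)}

lemma powWord_image_kleinIndices_subset {K : Subgroup G} (ha : a ^ 2 ∈ K) (hb : b ^ 2 ∈ K) :
    powWord a b c '' (kleinIndices : Set (ZMod 4 × ZMod 4 × ZMod 2)) ⊆ K := by
  rintro _ ⟨p, hp, rfl⟩
  simp only [kleinIndices, Finset.coe_insert, Finset.coe_singleton, Set.mem_insert_iff,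
    Set.mem_singleton_iff] at hp
  rcases hp with rfl | rfl | rfl | rfl <;> simp [powWord, ZMod.val_two_eq_two_mod, ha, hb, mul_mem]

lemma ncard_powWord_image_kleinIndices
    (hw : Function.Injective (powWord a b c : ZMod 4 × ZMod 4 × ZMod 2 → G)) :
    (powWord a b c '' (kleinIndices : Set (ZMod 4 × ZMod 4 × ZMod 2))).ncard = 4 := by
  rw [Set.ncard_image_of_injective _ hw, Set.ncard_coe_finset]
  rfl

lemma snd_snd_eq_zero_of_powWord_mem_normal {H : Subgroup G} (hH : H.Normal) (hH4 : Nat.card H = 4)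
    (hw : Function.Injective (powWord a b c : ZMod 4 × ZMod 4 × ZMod 2 → G))
    (hab : Commute a b) (hca : SemiconjBy c a a⁻¹) (hcb : SemiconjBy c b b⁻¹)
    {p : ZMod 4 × ZMod 4 × ZMod 2} (hp : powWord a b c p ∈ H) : p.2.2 = 0 := by
  obtain ⟨i, j, k⟩ := p
  by_contra hk
  obtain rfl : k = 1 := (by decide : ∀ k : ZMod 2, k ≠ 0 → k = 1) k hk
  have hx : a ^ i.val * b ^ j.val * c ∈ H := (congrArg (_ * ·) (pow_one c)).subst hp
  have ha2 := sq_mem_of_semiconjBy_inv hH hx <| SemiconjBy.mul_left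
    (((Commute.refl a).pow_left _).mul_left (hab.symm.pow_left _)).inv_right hca
  have hb2 := sq_mem_of_semiconjBy_inv hH hx <| SemiconjBy.mul_left
    ((hab.pow_left _).mul_left ((Commute.refl b).pow_left _)).inv_right hcb
  have hsub : insert (powWord a b c (i, j, (1 : ZMod 2)))
      (powWord a b c '' (kleinIndices : Set (ZMod 4 × ZMod 4 × ZMod 2))) ⊆ H :=
    Set.insert_subset hp (powWord_image_kleinIndices_subset ha2 hb2)
  have hnot : powWord a b c (i, j, (1 : ZMod 2)) ∉
      powWord a b c '' (kleinIndices : Set (ZMod 4 × ZMod 4 × ZMod 2)) := by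
    rw [hw.mem_set_image]
    simp [kleinIndices]
  have hH4' : (H : Set G).ncard = 4 := by rwa [← Nat.card_coe_set_eq, SetLike.coe_sort_coe]
  have := Set.ncard_le_ncard hsub (Set.finite_of_ncard_ne_zero (by omega))
  rw [Set.ncard_insert_of_notMem hnot, ncard_powWord_image_kleinIndices hw, hH4'] at this
  omega

lemma le_closure_of_normal_of_card_eq_four
    (hw : Function.Bijective (powWord a b c : ZMod 4 × ZMod 4 × ZMod 2 → G))
    (hab : Commute a b) (hca : SemiconjBy c a a⁻¹) (hcb : SemiconjBy c b b⁻¹)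
    {H : Subgroup G} (hH : H.Normal) (hH4 : Nat.card H = 4) : H ≤ closure {a, b} := by
  intro x hx
  obtain ⟨⟨i, j, k⟩, rfl⟩ := hw.2 x
  obtain rfl : k = 0 := snd_snd_eq_zero_of_powWord_mem_normal hH hH4 hw.1 hab hca hcb hx
  simpa [powWord] using mul_mem (pow_mem (subset_closure (by simp)) i.val)
    (pow_mem (subset_closure (by simp) : b ∈ closure {a, b}) j.val)

lemma subset_powWord_image_kleinIndices {H : Subgroup G} (hH : H.Normal) (hH4 : Nat.card H = 4)
    (hw : Function.Bijective (powWord a b c : ZMod 4 × ZMod 4 × ZMod 2 → G))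
    (ha : a ^ 4 = 1) (hb : b ^ 4 = 1) (hab : Commute a b) (hca : SemiconjBy c a a⁻¹)
    (hcb : SemiconjBy c b b⁻¹) (hsq : ∀ x ∈ H, x * x = 1) :
    (H : Set G) ⊆ powWord a b c '' (kleinIndices : Set (ZMod 4 × ZMod 4 × ZMod 2)) := by
  intro x hx
  obtain ⟨⟨i, j, k⟩, rfl⟩ := hw.2 x
  obtain rfl : k = 0 := snd_snd_eq_zero_of_powWord_mem_normal hH hH4 hw.1 hab hca hcb hx
  have hone : powWord a b c ((0 : ZMod 4), (0 : ZMod 4), (0 : ZMod 2)) = 1 := by simp [powWord]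
  have hii := hw.1 <|
    (powWord_mul_powWord ha hb hab i i j j).symm.trans ((hsq _ hx).trans hone.symm)
  simp only [Prod.mk.injEq] at hii
  exact ⟨_, (by decide : ∀ i j : ZMod 4, i + i = 0 → j + j = 0 →
    (i, j, (0 : ZMod 2)) ∈ kleinIndices) i j hii.1 hii.2.1, rfl⟩

lemma eq_closure_sq_of_normal_of_card_eq_four {H : Subgroup G} (hH : H.Normal)
    (hH4 : Nat.card H = 4) (hsq : ∀ x ∈ H, x * x = 1)
    (hw : Function.Bijective (powWord a b c : ZMod 4 × ZMod 4 × ZMod 2 → G))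
    (ha : a ^ 4 = 1) (hb : b ^ 4 = 1) (hab : Commute a b) (hca : SemiconjBy c a a⁻¹)
    (hcb : SemiconjBy c b b⁻¹) : H = closure {a ^ 2, b ^ 2} := by
  have hHK := subset_powWord_image_kleinIndices hH hH4 hw ha hb hab hca hcb hsq
  have hHeq := Set.eq_of_subset_of_ncard_le hHK (by
    rw [ncard_powWord_image_kleinIndices hw.1, ← Nat.card_coe_set_eq, SetLike.coe_sort_coe, hH4])
  have hmem (p : ZMod 4 × ZMod 4 × ZMod 2) (hp : p ∈ kleinIndices) : powWord a b c p ∈ H := by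
    rw [← SetLike.mem_coe, hHeq]
    exact ⟨p, hp, rfl⟩
  apply le_antisymm
  · exact SetLike.coe_subset_coe.mp <| hHK.trans <|
      powWord_image_kleinIndices_subset (subset_closure (by simp)) (subset_closure (by simp))
  · rw [closure_le, Set.insert_subset_iff, Set.singleton_subset_iff]
    constructor
    · simpa [powWord, ZMod.val_two_eq_two_mod] using hmem (2, 0, 0) (by decide)
    · simpa [powWord, ZMod.val_two_eq_two_mod] using hmem (0, 2, 0) (by decide)

end OrderThirtyTwo

/-- Let `G₂ = ⟨a,b,c | a⁴ = b⁴ = c² = 1, [a,b] = 1, [c,a] = a², [c,b] = b²⟩ ≅ ℤ₂ ⋉ (ℤ₄)²`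
(`SmallGroup(32,34)`).  Every normal abelian subgroup of `G₂` of order 4 is contained in
`⟨a,b⟩`, and the only normal subgroup of `G₂` isomorphic to `ℤ₂ × ℤ₂` is the central
subgroup `⟨a², b²⟩`. -/
theorem stmt16 (G : Type*) [Group G] (a b c : G)
    (ha : a ^ 4 = 1) (hb : b ^ 4 = 1) (hc : c ^ 2 = 1)
    (hab : a * b = b * a)
    (hca : c⁻¹ * a⁻¹ * c * a = a ^ 2) (hcb : c⁻¹ * b⁻¹ * c * b = b ^ 2)
    (hgen : Subgroup.closure {a, b, c} = ⊤) (hcard : Nat.card G = 32) :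
    (∀ H : Subgroup G, H.Normal → (∀ x y : H, x * y = y * x) → Nat.card H = 4 →
      H ≤ Subgroup.closure {a, b}) ∧
    (∀ H : Subgroup G, H.Normal →
      Nonempty (H ≃* (Multiplicative (ZMod 2) × Multiplicative (ZMod 2))) →
      H = Subgroup.closure {a ^ 2, b ^ 2}) := by
  have hca' := semiconjBy_inv_of_inv_mul_inv_mul_mul_eq_sq hca
  have hcb' := semiconjBy_inv_of_inv_mul_inv_mul_mul_eq_sq hcb
  have hw := powWord_bijective (m := 4) (n := 4) (l := 2) ha hb hc hab hca' hcb' hgen hcard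
  refine ⟨fun H hH _ hH4 => le_closure_of_normal_of_card_eq_four hw hab hca' hcb' hH hH4, ?_⟩
  rintro H hH ⟨e⟩
  have hH4 : Nat.card H = 4 := by simp [Nat.card_congr e.toEquiv]
  have hsq (x : G) (hx : x ∈ H) : x * x = 1 := by
    have hV4 : ∀ v : Multiplicative (ZMod 2) × Multiplicative (ZMod 2), v * v = 1 := by decide
    simpa using congrArg Subtype.val <|
      e.injective (a₁ := ⟨x, hx⟩ * ⟨x, hx⟩) (a₂ := 1) (by rw [map_mul, map_one, hV4])
  exact eq_closure_sq_of_normal_of_card_eq_four hH hH4 hsq hw ha hb hab hca' hcb'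
end

section
/- Let G₂ = ⟨a,b,c | a⁴ = b⁴ = c² = 1, [a,b]=1, [c,a]=a², [c,b]=b²⟩. The only abelian normal subgroup of G₂ of order 16 is ⟨a,b⟩ ≅ ℤ₄ × ℤ₄. -/
/-!
Conjugation by `c` inverts `a` and `b`, hence the whole abelian subgroup `A = ⟨a, b⟩`; so `A` is
normal and `G / A` is generated by the image of `c`, giving `[G : A] ∣ 2`. As `A` is a quotient of
`ℤ₄ × ℤ₄` and `|G| = 32`, this forces `|A| = 16` and `A ≅ ℤ₄ × ℤ₄`.

If `H ≠ A` is abelian of order 16, pick `h ∈ H \ A`. Then `hc ∈ A`, so every `y ∈ A ∩ H` commutes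
with both `h` and `hc`, hence with `c`; being also inverted by `c`, it satisfies `y² = 1`. But
`|A ∩ H| ≥ 8`, while `ℤ₄ × ℤ₄` has only 4 elements of order dividing 2.
-/

open Subgroup

section
variable {G : Type*} [Group G]

def zmodPowersHom (n : ℕ) (a : G) (ha : a ^ n = 1) : Multiplicative (ZMod n) →* G :=
  AddMonoidHom.toMultiplicativeLeft
    (ZMod.lift n ⟨zmultiplesHom (Additive G) (Additive.ofMul a), by simp [← ofMul_pow, ha]⟩)

theorem zmodPowersHom_ofAdd_intCast {n : ℕ} {a : G} (ha : a ^ n = 1) (k : ℤ) :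
    zmodPowersHom n a ha (Multiplicative.ofAdd (k : ZMod n)) = a ^ k := by
  simp [zmodPowersHom]

theorem range_zmodPowersHom {n : ℕ} {a : G} (ha : a ^ n = 1) :
    (zmodPowersHom n a ha).range = zpowers a := by
  ext y
  constructor
  · rintro ⟨x, rfl⟩
    obtain ⟨k, hk⟩ := ZMod.intCast_surjective (Multiplicative.toAdd x)
    rw [show x = Multiplicative.ofAdd (k : ZMod n) from hk ▸ rfl, zmodPowersHom_ofAdd_intCast]
    exact zpow_mem_zpowers a k
  · rintro ⟨k, rfl⟩
    exact ⟨_, zmodPowersHom_ofAdd_intCast ha k⟩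

theorem exists_surjective_zmod_prod_monoidHom_closure_pair {n : ℕ} {a b : G} (hab : Commute a b)
    (ha : a ^ n = 1) (hb : b ^ n = 1) :
    ∃ φ : Multiplicative (ZMod n) × Multiplicative (ZMod n) →* closure {a, b},
      Function.Surjective φ := by
  have comm : ∀ x y, Commute (zmodPowersHom n a ha x) (zmodPowersHom n b hb y) := by
    intro x y
    obtain ⟨i, hi⟩ : zmodPowersHom n a ha x ∈ zpowers a := range_zmodPowersHom ha ▸ ⟨x, rfl⟩
    obtain ⟨j, hj⟩ : zmodPowersHom n b hb y ∈ zpowers b := range_zmodPowersHom hb ▸ ⟨y, rfl⟩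
    rw [← hi, ← hj]
    exact hab.zpow_zpow i j
  let φ := (zmodPowersHom n a ha).noncommCoprod (zmodPowersHom n b hb) comm
  have hrange : φ.range = closure {a, b} := by
    rw [MonoidHom.noncommCoprod_range, range_zmodPowersHom, range_zmodPowersHom,
      zpowers_eq_closure, zpowers_eq_closure, ← Subgroup.closure_union, Set.singleton_union]
  exact ⟨(MulEquiv.subgroupCongr hrange).toMonoidHom.comp φ.rangeRestrict,
    (MulEquiv.subgroupCongr hrange).surjective.comp φ.rangeRestrict_surjective⟩

theorem conj_eq_inv_of_commutator_eq_sq {a c : G} (h : c⁻¹ * a⁻¹ * c * a = a ^ 2) :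
    c⁻¹ * a * c = a⁻¹ := by
  have h' : c⁻¹ * a⁻¹ * c = a := by
    calc c⁻¹ * a⁻¹ * c = (c⁻¹ * a⁻¹ * c * a) * a⁻¹ := by group
      _ = a := by rw [h]; group
  calc c⁻¹ * a * c = (c⁻¹ * a⁻¹ * c)⁻¹ := by group
    _ = a⁻¹ := by rw [h']

theorem conj_eq_inv_of_mem_closure {S : Set G} {c : G} (hS : ∀ x ∈ S, ∀ y ∈ S, x * y = y * x)
    (hc : ∀ x ∈ S, c⁻¹ * x * c = x⁻¹) {y : G} (hy : y ∈ closure S) : c⁻¹ * y * c = y⁻¹ := by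
  have := isMulCommutative_closure hS
  induction hy using closure_induction with
  | mem x hx => exact hc x hx
  | one => group
  | mul x y hx hy ihx ihy =>
    calc c⁻¹ * (x * y) * c = (c⁻¹ * x * c) * (c⁻¹ * y * c) := by group
      _ = (x * y)⁻¹ := by rw [ihx, ihy, mul_inv_rev, setLike_mul_comm (inv_mem hx) (inv_mem hy)]
  | inv x hx ih =>
    calc c⁻¹ * x⁻¹ * c = (c⁻¹ * x * c)⁻¹ := by group
      _ = x⁻¹⁻¹ := by rw [ih]

theorem mem_normalizer_of_conj_eq_inv {N : Subgroup G} {c : G} (hc : c ^ 2 = 1)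
    (hinv : ∀ y ∈ N, c⁻¹ * y * c = y⁻¹) : c ∈ normalizer (N : Set G) := by
  refine mem_normalizer_iff''.mpr fun y => ⟨fun hy => hinv y hy ▸ inv_mem hy, fun hy => ?_⟩
  have hy' : y = c⁻¹ * (c⁻¹ * y * c) * c := by
    calc y = (c ^ 2)⁻¹ * y * c ^ 2 := by rw [hc]; group
      _ = c⁻¹ * (c⁻¹ * y * c) * c := by simp only [sq, mul_inv_rev, mul_assoc]
  rw [hy', hinv _ hy]
  exact inv_mem hy

theorem normal_of_closure_insert_eq_top {N : Subgroup G} {S : Set G} {c : G}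
    (hgen : closure (insert c S) = ⊤) (hS : S ⊆ N) (hc : c ∈ normalizer (N : Set G)) :
    N.Normal := by
  refine normalizer_eq_top_iff.mp (top_le_iff.mp ?_)
  rw [← hgen, closure_le]
  exact Set.insert_subset hc (hS.trans fun _ hy => le_normalizer hy)

theorem index_dvd_of_closure_insert_eq_top {N : Subgroup G} [N.Normal] {S : Set G} {c : G}
    {n : ℕ} (hgen : closure (insert c S) = ⊤) (hS : S ⊆ N) (hc : c ^ n = 1) : N.index ∣ n := by
  have hle : closure (insert c S) ≤ (zpowers (c : G ⧸ N)).comap (QuotientGroup.mk' N) := by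
    rw [closure_le, Set.insert_subset_iff]
    refine ⟨mem_zpowers _, fun s hs => ?_⟩
    simp [(QuotientGroup.eq_one_iff s).mpr (hS hs)]
  have htop : zpowers (c : G ⧸ N) = ⊤ :=
    eq_top_iff.mpr fun q _ => QuotientGroup.induction_on q fun g => hle (hgen ▸ mem_top g)
  rw [index_eq_card, ← card_top, ← htop, Nat.card_zpowers]
  exact orderOf_dvd_of_pow_eq_one (by rw [← QuotientGroup.mk_pow, hc, QuotientGroup.mk_one])

theorem sq_eq_one_of_mem_inf_of_not_le {A H : Subgroup G} [IsMulCommutative A]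
    [IsMulCommutative H] (hA : A.index = 2) {c : G} (hc : c ∉ A)
    (hinv : ∀ y ∈ A, c⁻¹ * y * c = y⁻¹) (hHA : ¬H ≤ A) {y : G} (hy : y ∈ A ⊓ H) :
    y ^ 2 = 1 := by
  obtain ⟨h, hhH, hhA⟩ := SetLike.not_le_iff_exists.mp hHA
  have hhc : h * c ∈ A := (mul_mem_iff_of_index_two hA).mpr (iff_of_false hhA hc)
  have hch : Commute c y := by
    have := (Commute.inv_left (setLike_mul_comm hhH hy.2)).mul_left (setLike_mul_comm hhc hy.1)
    rwa [inv_mul_cancel_left] at this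
  have hyy : y = y⁻¹ := by rw [← hinv y hy.1, mul_assoc, hch.symm.eq, inv_mul_cancel_left]
  rw [sq, mul_eq_one_iff_eq_inv]
  exact hyy

theorem card_le_card_sq_eq_one_of_le [Finite G] {A K : Subgroup G} (hKA : K ≤ A)
    (hK : ∀ y ∈ K, y ^ 2 = 1) : Nat.card K ≤ Nat.card {y : A // y ^ 2 = 1} :=
  Nat.card_le_card_of_injective (fun y => ⟨⟨y, hKA y.2⟩, Subtype.ext (hK y y.2)⟩)
    fun _ _ hyz => Subtype.ext (congrArg (fun w : {y : A // y ^ 2 = 1} => (w : G)) hyz)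

theorem card_sq_eq_one_congr {M N : Type*} [Monoid M] [Monoid N] (e : M ≃* N) :
    Nat.card {x : M // x ^ 2 = 1} = Nat.card {y : N // y ^ 2 = 1} :=
  Nat.card_congr (e.toEquiv.subtypeEquiv fun x => by simp [← map_pow])

theorem card_sq_eq_one_zmod_four_prod :
    Nat.card {p : Multiplicative (ZMod 4) × Multiplicative (ZMod 4) // p ^ 2 = 1} = 4 := by
  rw [Nat.card_eq_fintype_card]
  decide

theorem card_inf_mul_relIndex (H K : Subgroup G) :
    Nat.card (H ⊓ K : Subgroup G) * H.relIndex K = Nat.card K := by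
  rw [← relIndex_bot_left (H ⊓ K), ← relIndex_bot_left K, ← inf_relIndex_right H K,
    relIndex_mul_relIndex ⊥ (H ⊓ K) K bot_le inf_le_right]

theorem le_of_two_mul_card_sq_eq_one_lt [Finite G] {A H : Subgroup G} [A.Normal]
    [IsMulCommutative A] [IsMulCommutative H] (hA : A.index = 2) {c : G} (hc : c ∉ A)
    (hinv : ∀ y ∈ A, c⁻¹ * y * c = y⁻¹) (hcard : 2 * Nat.card {y : A // y ^ 2 = 1} < Nat.card H) :
    H ≤ A := by
  by_contra hHA
  have hle : Nat.card (A ⊓ H : Subgroup G) ≤ Nat.card {y : A // y ^ 2 = 1} :=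
    card_le_card_sq_eq_one_of_le inf_le_left fun y => sq_eq_one_of_mem_inf_of_not_le hA hc hinv hHA
  have hrel : A.relIndex H ≤ 2 := Nat.le_of_dvd two_pos (hA ▸ relIndex_dvd_index_of_normal A H)
  have hmul := card_inf_mul_relIndex A H
  nlinarith

end

/-- Let `G₂ = ⟨a,b,c | a⁴ = b⁴ = c² = 1, [a,b] = 1, [c,a] = a², [c,b] = b²⟩`
(`SmallGroup(32,34)`).  The only abelian normal subgroup of `G₂` of order 16 is
`⟨a,b⟩ ≅ ℤ₄ × ℤ₄`. -/
theorem stmt17 (G : Type*) [Group G] (a b c : G)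
    (ha : a ^ 4 = 1) (hb : b ^ 4 = 1) (hc : c ^ 2 = 1)
    (hab : a * b = b * a)
    (hca : c⁻¹ * a⁻¹ * c * a = a ^ 2) (hcb : c⁻¹ * b⁻¹ * c * b = b ^ 2)
    (hgen : Subgroup.closure {a, b, c} = ⊤) (hcard : Nat.card G = 32) :
    (∀ H : Subgroup G,
      (H.Normal ∧ (∀ x y : H, x * y = y * x) ∧ Nat.card H = 16) ↔
        H = Subgroup.closure {a, b}) ∧
    Nonempty (Subgroup.closure {a, b} ≃*
      (Multiplicative (ZMod 4) × Multiplicative (ZMod 4))) := by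
  have : Finite G := Nat.finite_of_card_ne_zero (by omega)
  set A := closure ({a, b} : Set G)
  have hcomm : ∀ x ∈ ({a, b} : Set G), ∀ y ∈ ({a, b} : Set G), x * y = y * x := by
    rintro x (rfl | rfl) y (rfl | rfl) <;> simp [hab]
  have := isMulCommutative_closure hcomm
  have hinv : ∀ y ∈ A, c⁻¹ * y * c = y⁻¹ := fun y =>
    conj_eq_inv_of_mem_closure hcomm (by simp [conj_eq_inv_of_commutator_eq_sq, hca, hcb])
  have hsub : ({a, b} : Set G) ⊆ A := subset_closure
  have hgen' : closure (insert c {a, b}) = ⊤ := by rwa [Set.insert_comm c a, Set.pair_comm c b]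
  have hN := normal_of_closure_insert_eq_top hgen' hsub (mem_normalizer_of_conj_eq_inv hc hinv)
  obtain ⟨φ, hφ⟩ : ∃ φ : Multiplicative (ZMod 4) × Multiplicative (ZMod 4) →* A,
      Function.Surjective φ := exists_surjective_zmod_prod_monoidHom_closure_pair hab ha hb
  obtain ⟨hcardA, hidx⟩ : Nat.card A = 16 ∧ A.index = 2 := by
    have hle : Nat.card A ≤ 16 := by
      simpa [Nat.card_eq_fintype_card] using Nat.card_le_card_of_surjective φ hφ
    have hmul := card_mul_index A
    rcases (Nat.dvd_prime Nat.prime_two).mp (index_dvd_of_closure_insert_eq_top hgen' hsub hc)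
      with h | h <;> rw [h, hcard] at hmul <;> omega
  have hφ' := (Nat.bijective_iff_surjective_and_card φ).mpr ⟨hφ, by simp [hcardA]⟩
  have hcA : c ∉ A := fun hcA => by
    have : A = ⊤ := top_le_iff.mp (hgen' ▸ (closure_le _).mpr (Set.insert_subset hcA hsub))
    simp [this] at hidx
  refine ⟨fun H => ⟨fun ⟨_, hHcomm, hH16⟩ => ?_, ?_⟩, ⟨(MulEquiv.ofBijective φ hφ').symm⟩⟩
  · have : IsMulCommutative H := ⟨⟨hHcomm⟩⟩
    refine eq_of_le_of_card_ge (le_of_two_mul_card_sq_eq_one_lt hidx hcA hinv ?_)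
      (by rw [hcardA, hH16])
    rw [← card_sq_eq_one_congr (MulEquiv.ofBijective φ hφ'), card_sq_eq_one_zmod_four_prod, hH16]
    norm_num
  · rintro rfl
    exact ⟨hN, fun x y => Subtype.ext (setLike_mul_comm x.2 y.2), hcardA⟩
end

section
/- Let G₁ = ⟨a,b,c,d,e | a²=b²=c²=d²=e²=1, a,b,c,d pairwise commute, a,b central, [e,c]=a, [e,d]=b⟩ ≅ ℤ₂ ⋉ (ℤ₂)⁴. The only abelian normal subgroup of G₁ of order 16 is ⟨a,b,c,d⟩ ≅ (ℤ₂)⁴. -/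
section Aux
variable {G : Type*} [Group G]

def pw (g : G) (t : ZMod 2) : G := g ^ t.val

lemma zmod2_cases (t : ZMod 2) : t = 0 ∨ t = 1 := by revert t; decide

lemma pw_zero (g : G) : pw g 0 = 1 := by simp [pw, ZMod.val_zero]
lemma pw_one (g : G) : pw g 1 = g := by
  have : (1 : ZMod 2).val = 1 := rfl
  simp [pw, this]

lemma pw_add (g : G) (hg : g ^ 2 = 1) (s t : ZMod 2) :
    pw g (s + t) = pw g s * pw g t := by
  rcases zmod2_cases s with rfl | rfl <;> rcases zmod2_cases t with rfl | rfl <;>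
    simp [pw_zero, pw_one, show (1+1 : ZMod 2) = 0 from rfl, ← pow_two, hg]

lemma pw_comm {x y : G} (h : x * y = y * x) (s t : ZMod 2) :
    pw x s * pw y t = pw y t * pw x s := by
  rcases zmod2_cases s with rfl | rfl <;> rcases zmod2_cases t with rfl | rfl <;>
    simp [pw_zero, pw_one, h]

lemma pw_comm' {x y : G} (h : x * y = y * x) (s t : ZMod 2) (g : G) :
    pw x s * (pw y t * g) = pw y t * (pw x s * g) := by
  rw [← mul_assoc, pw_comm h, mul_assoc]

lemma pw_merge {x : G} (hx : x ^ 2 = 1) (s t : ZMod 2) :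
    pw x s * pw x t = pw x (s + t) := (pw_add x hx s t).symm

lemma pw_merge' {x : G} (hx : x ^ 2 = 1) (s t : ZMod 2) (g : G) :
    pw x s * (pw x t * g) = pw x (s + t) * g := by
  rw [← mul_assoc, pw_merge hx]

lemma pw_swap {x y z : G} (h : x * y = y * (z * x)) (s t : ZMod 2) :
    pw x s * pw y t = pw y t * (pw z (s * t) * pw x s) := by
  rcases zmod2_cases s with rfl | rfl <;> rcases zmod2_cases t with rfl | rfl <;>
    simp [pw_zero, pw_one, h]

lemma pw_swap' {x y z : G} (h : x * y = y * (z * x)) (s t : ZMod 2) (g : G) :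
    pw x s * (pw y t * g) = pw y t * (pw z (s * t) * (pw x s * g)) := by
  rw [← mul_assoc, pw_swap h, mul_assoc, mul_assoc]

/-- normal form word -/
def ff (a b c d e : G) (i j k l m : ZMod 2) : G :=
  pw a i * (pw b j * (pw c k * (pw d l * pw e m)))

/-- normal form on 5-tuples -/
def fful (a b c d e : G) (v : ZMod 2 × ZMod 2 × ZMod 2 × ZMod 2 × ZMod 2) : G :=
  ff a b c d e v.1 v.2.1 v.2.2.1 v.2.2.2.1 v.2.2.2.2

lemma ff_congr {a b c d e : G} {i j k l m i' j' k' l' m' : ZMod 2}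
    (h1 : i = i') (h2 : j = j') (h3 : k = k') (h4 : l = l') (h5 : m = m') :
    ff a b c d e i j k l m = ff a b c d e i' j' k' l' m' := by
  subst h1 h2 h3 h4 h5; rfl

/-- the bundled presentation -/
structure Pres (a b c d e : G) : Prop where
  ha : a ^ 2 = 1
  hb : b ^ 2 = 1
  hc : c ^ 2 = 1
  hd : d ^ 2 = 1
  he : e ^ 2 = 1
  hab : a * b = b * a
  hac : a * c = c * a
  had : a * d = d * a
  hbc : b * c = c * b
  hbd : b * d = d * b
  hcd : c * d = d * c
  hae : a * e = e * a
  hbe : b * e = e * b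
  hec : e⁻¹ * c⁻¹ * e * c = a
  hed : e⁻¹ * d⁻¹ * e * d = b

namespace Pres
variable {a b c d e : G} (P : Pres a b c d e)
include P

lemma einv : e⁻¹ = e := by
  have := P.he
  rw [pow_two] at this
  exact inv_eq_of_mul_eq_one_right this
lemma cinv : c⁻¹ = c := by
  have := P.hc
  rw [pow_two] at this
  exact inv_eq_of_mul_eq_one_right this
lemma dinv : d⁻¹ = d := by
  have := P.hd
  rw [pow_two] at this
  exact inv_eq_of_mul_eq_one_right this

lemma hec' : e * c = c * (a * e) := by
  have h := P.hec
  rw [P.einv, P.cinv] at h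
  have h2 : e * c = a * (e * c)⁻¹ := by rw [← h]; group
  rw [h2, mul_inv_rev, P.cinv, P.einv, ← mul_assoc, P.hac, mul_assoc]

lemma hed' : e * d = d * (b * e) := by
  have h := P.hed
  rw [P.einv, P.dinv] at h
  have h2 : e * d = b * (e * d)⁻¹ := by rw [← h]; group
  rw [h2, mul_inv_rev, P.dinv, P.einv, ← mul_assoc, P.hbd, mul_assoc]

lemma ffmul (i j k l m i' j' k' l' m' : ZMod 2) :
    ff a b c d e i j k l m * ff a b c d e i' j' k' l' m' =
    ff a b c d e (i + i' + m * k') (j + j' + m * l') (k + k') (l + l') (m + m') := by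
  simp only [ff, mul_assoc,
    pw_comm P.hab.symm, pw_comm' P.hab.symm, pw_comm P.hac.symm, pw_comm' P.hac.symm,
    pw_comm P.hbc.symm, pw_comm' P.hbc.symm, pw_comm P.had.symm, pw_comm' P.had.symm,
    pw_comm P.hbd.symm, pw_comm' P.hbd.symm, pw_comm P.hcd.symm, pw_comm' P.hcd.symm,
    pw_comm P.hae.symm, pw_comm' P.hae.symm, pw_comm P.hbe.symm, pw_comm' P.hbe.symm,
    pw_swap P.hec', pw_swap' P.hec', pw_swap P.hed', pw_swap' P.hed',
    pw_merge P.ha, pw_merge' P.ha, pw_merge P.hb, pw_merge' P.hb,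
    pw_merge P.hc, pw_merge' P.hc, pw_merge P.hd, pw_merge' P.hd,
    pw_merge P.he, pw_merge' P.he]
  simp only [add_assoc]

omit P
lemma ff_one : ff a b c d e 0 0 0 0 0 = 1 := by simp [ff, pw_zero]
lemma ff_a : ff a b c d e 1 0 0 0 0 = a := by simp [ff, pw_zero, pw_one]
lemma ff_b : ff a b c d e 0 1 0 0 0 = b := by simp [ff, pw_zero, pw_one]
lemma ff_c : ff a b c d e 0 0 1 0 0 = c := by simp [ff, pw_zero, pw_one]
lemma ff_d : ff a b c d e 0 0 0 1 0 = d := by simp [ff, pw_zero, pw_one]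
lemma ff_e : ff a b c d e 0 0 0 0 1 = e := by simp [ff, pw_zero, pw_one]
include P

lemma ff_inv (i j k l m : ZMod 2) :
    (ff a b c d e i j k l m)⁻¹ = ff a b c d e (i + m * k) (j + m * l) k l m := by
  symm
  apply eq_inv_of_mul_eq_one_left
  rw [P.ffmul]
  rw [show ff a b c d e (i + m*k + i + m*k) (j + m*l + j + m*l) (k+k) (l+l) (m+m)
        = ff a b c d e 0 0 0 0 0 from
    ff_congr (by revert i m k; decide) (by revert j m l; decide)
      (by revert k; decide) (by revert l; decide) (by revert m; decide)]
  exact ff_one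

/-- the whole group as the range of `fful` -/
def Sgrp : Subgroup G where
  carrier := Set.range (fful a b c d e)
  one_mem' := ⟨(0,0,0,0,0), ff_one⟩
  mul_mem' := by
    rintro _ _ ⟨v, rfl⟩ ⟨w, rfl⟩
    exact ⟨(v.1 + w.1 + v.2.2.2.2 * w.2.2.1, v.2.1 + w.2.1 + v.2.2.2.2 * w.2.2.2.1,
      v.2.2.1 + w.2.2.1, v.2.2.2.1 + w.2.2.2.1, v.2.2.2.2 + w.2.2.2.2),
      (P.ffmul _ _ _ _ _ _ _ _ _ _).symm⟩
  inv_mem' := by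
    rintro _ ⟨v, rfl⟩
    exact ⟨(v.1 + v.2.2.2.2 * v.2.2.1, v.2.1 + v.2.2.2.2 * v.2.2.2.1,
      v.2.2.1, v.2.2.2.1, v.2.2.2.2), (P.ff_inv _ _ _ _ _).symm⟩

lemma fful_surj (hgen : Subgroup.closure {a, b, c, d, e} = ⊤) :
    Function.Surjective (fful a b c d e) := by
  intro g
  have hle : Subgroup.closure {a, b, c, d, e} ≤ P.Sgrp := by
    rw [Subgroup.closure_le]
    rintro x (rfl | rfl | rfl | rfl | rfl)
    · exact ⟨(1,0,0,0,0), ff_a⟩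
    · exact ⟨(0,1,0,0,0), ff_b⟩
    · exact ⟨(0,0,1,0,0), ff_c⟩
    · exact ⟨(0,0,0,1,0), ff_d⟩
    · exact ⟨(0,0,0,0,1), ff_e⟩
  rw [hgen] at hle
  exact hle (Subgroup.mem_top g)

omit P
/-- membership in the candidate subgroup -/
lemma mem_closure4 {i j k l : ZMod 2} :
    ff a b c d e i j k l 0 ∈ Subgroup.closure {a, b, c, d} := by
  have ha' : a ∈ Subgroup.closure {a, b, c, d} :=
    Subgroup.subset_closure (by simp)
  have hb' : b ∈ Subgroup.closure {a, b, c, d} :=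
    Subgroup.subset_closure (by simp)
  have hc' : c ∈ Subgroup.closure {a, b, c, d} :=
    Subgroup.subset_closure (by simp)
  have hd' : d ∈ Subgroup.closure {a, b, c, d} :=
    Subgroup.subset_closure (by simp)
  have hpw : ∀ (x : G), x ∈ Subgroup.closure {a, b, c, d} → ∀ t : ZMod 2,
      pw x t ∈ Subgroup.closure {a, b, c, d} := fun x hx t => pow_mem hx _
  simp only [ff, pw_zero, mul_one]
  exact mul_mem (hpw _ ha' _) (mul_mem (hpw _ hb' _) (mul_mem (hpw _ hc' _) (hpw _ hd' _)))
include P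

lemma closure4_eq (x : G) :
    x ∈ Subgroup.closure {a, b, c, d} ↔ ∃ i j k l, ff a b c d e i j k l 0 = x := by
  constructor
  · intro hx
    have : Subgroup.closure {a, b, c, d} ≤
        { carrier := {x | ∃ i j k l, ff a b c d e i j k l 0 = x}
          one_mem' := ⟨0, 0, 0, 0, ff_one⟩
          mul_mem' := by
            rintro _ _ ⟨i, j, k, l, rfl⟩ ⟨i', j', k', l', rfl⟩
            refine ⟨i + i', j + j', k + k', l + l', ?_⟩
            rw [P.ffmul]
            exact ff_congr (by ring) (by ring) rfl rfl (by ring)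
          inv_mem' := by
            rintro _ ⟨i, j, k, l, rfl⟩
            refine ⟨i, j, k, l, ?_⟩
            rw [P.ff_inv]
            exact ff_congr (by ring) (by ring) rfl rfl rfl } := by
      rw [Subgroup.closure_le]
      rintro x (rfl | rfl | rfl | rfl)
      · exact ⟨1, 0, 0, 0, ff_a⟩
      · exact ⟨0, 1, 0, 0, ff_b⟩
      · exact ⟨0, 0, 1, 0, ff_c⟩
      · exact ⟨0, 0, 0, 1, ff_d⟩
    exact this hx
  · rintro ⟨i, j, k, l, rfl⟩
    exact mem_closure4

end Pres
end Aux

/-- Let `G₁ = ⟨a,b,c,d,e | a²=b²=c²=d²=e²=1, a,b,c,d pairwise commute, a,b central,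
[e,c]=a, [e,d]=b⟩ ≅ ℤ₂ ⋉ (ℤ₂)⁴` (`SmallGroup(32,27)`).  The only abelian normal
subgroup of `G₁` of order 16 is `⟨a,b,c,d⟩ ≅ (ℤ₂)⁴`. -/
theorem stmt18 (G : Type*) [Group G] (a b c d e : G)
    (ha : a ^ 2 = 1) (hb : b ^ 2 = 1) (hc : c ^ 2 = 1) (hd : d ^ 2 = 1) (he : e ^ 2 = 1)
    (hab : a * b = b * a) (hac : a * c = c * a) (had : a * d = d * a)
    (hbc : b * c = c * b) (hbd : b * d = d * b) (hcd : c * d = d * c)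
    (hae : a * e = e * a) (hbe : b * e = e * b)
    (hec : e⁻¹ * c⁻¹ * e * c = a) (hed : e⁻¹ * d⁻¹ * e * d = b)
    (hgen : Subgroup.closure {a, b, c, d, e} = ⊤) (hcard : Nat.card G = 32) :
    (∀ H : Subgroup G,
      (H.Normal ∧ (∀ x y : H, x * y = y * x) ∧ Nat.card H = 16) ↔
        H = Subgroup.closure {a, b, c, d}) ∧
    Nonempty (Subgroup.closure {a, b, c, d} ≃*
      (Multiplicative (ZMod 2) × Multiplicative (ZMod 2) ×
        Multiplicative (ZMod 2) × Multiplicative (ZMod 2))) := by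
  have P : Pres a b c d e := ⟨ha,hb,hc,hd,he,hab,hac,had,hbc,hbd,hcd,hae,hbe,hec,hed⟩
  have hfin : Finite G := Nat.finite_of_card_ne_zero (by omega)
  have hbij : Function.Bijective (fful a b c d e) :=
    (Nat.bijective_iff_surjective_and_card _).mpr ⟨P.fful_surj hgen, by
      rw [hcard]; simp [Nat.card_eq_fintype_card]⟩
  have hcomp : ∀ {i j k l m i' j' k' l' m' : ZMod 2},
      ff a b c d e i j k l m = ff a b c d e i' j' k' l' m' →
      i = i' ∧ j = j' ∧ k = k' ∧ l = l' ∧ m = m' := by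
    intro i j k l m i' j' k' l' m' hEq
    have := hbij.1 (a₁ := (i,j,k,l,m)) (a₂ := (i',j',k',l',m')) hEq
    simpa [Prod.ext_iff] using this
  -- cardinality of K
  have hK4inj : Function.Injective (fun v : ZMod 2 × ZMod 2 × ZMod 2 × ZMod 2 =>
      ff a b c d e v.1 v.2.1 v.2.2.1 v.2.2.2 0) := by
    rintro ⟨i, j, k, l⟩ ⟨i', j', k', l'⟩ h
    obtain ⟨h1, h2, h3, h4, -⟩ := hcomp h
    subst h1; subst h2; subst h3; subst h4; rfl
  have hKsetrange : ((Subgroup.closure {a, b, c, d} : Subgroup G) : Set G) =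
      Set.range (fun v : ZMod 2 × ZMod 2 × ZMod 2 × ZMod 2 =>
        ff a b c d e v.1 v.2.1 v.2.2.1 v.2.2.2 0) := by
    ext x
    simp only [SetLike.mem_coe, P.closure4_eq, Set.mem_range]
    constructor
    · rintro ⟨i, j, k, l, rfl⟩; exact ⟨(i, j, k, l), rfl⟩
    · rintro ⟨⟨i, j, k, l⟩, rfl⟩; exact ⟨i, j, k, l, rfl⟩
  have hcardK : Nat.card (Subgroup.closure {a, b, c, d} : Subgroup G) = 16 := by
    have h1 : Nat.card (Subgroup.closure {a, b, c, d} : Subgroup G) =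
        Nat.card (Set.range (fun v : ZMod 2 × ZMod 2 × ZMod 2 × ZMod 2 =>
          ff a b c d e v.1 v.2.1 v.2.2.1 v.2.2.2 0)) :=
      Nat.card_congr (Equiv.setCongr hKsetrange)
    rw [h1, Nat.card_range_of_injective hK4inj]
    simp [Nat.card_eq_fintype_card]
  -- K is abelian
  have hKab : ∀ x y : (Subgroup.closure {a, b, c, d} : Subgroup G), x * y = y * x := by
    rintro ⟨x, hx⟩ ⟨y, hy⟩
    rw [P.closure4_eq] at hx hy
    obtain ⟨i, j, k, l, rfl⟩ := hx
    obtain ⟨i', j', k', l', rfl⟩ := hy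
    apply Subtype.ext
    show ff a b c d e i j k l 0 * ff a b c d e i' j' k' l' 0 = _ * _
    rw [P.ffmul, P.ffmul]
    exact ff_congr (by ring) (by ring) (by ring) (by ring) rfl
  -- K is normal
  have hKnorm : (Subgroup.closure {a, b, c, d} : Subgroup G).Normal := by
    constructor
    intro n hn g
    rw [P.closure4_eq] at hn
    obtain ⟨i, j, k, l, rfl⟩ := hn
    obtain ⟨⟨w1, w2, w3, w4, w5⟩, rfl⟩ := hbij.2 g
    rw [P.closure4_eq]
    show ∃ _ _ _ _, _ = ff a b c d e w1 w2 w3 w4 w5 * ff a b c d e i j k l 0 *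
      (ff a b c d e w1 w2 w3 w4 w5)⁻¹
    rw [P.ff_inv, P.ffmul, P.ffmul]
    exact ⟨_, _, _, _, ff_congr rfl rfl rfl rfl (by revert w5; decide)⟩
  refine ⟨fun H => ⟨fun ⟨hHnorm, hHab, hH16⟩ => ?_, fun hH => ?_⟩, ⟨?_⟩⟩
  · -- uniqueness
    by_cases hHK : H ≤ Subgroup.closure {a, b, c, d}
    · exact Subgroup.eq_of_le_of_card_ge hHK (by rw [hcardK, hH16])
    exfalso
    obtain ⟨x, hxH, hxK⟩ := SetLike.not_le_iff_exists.mp hHK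
    obtain ⟨⟨w1, w2, w3, w4, w5⟩, rfl⟩ := hbij.2 x
    have hw5 : w5 = 1 := by
      rcases zmod2_cases w5 with h0 | h1
      · exact absurd ((P.closure4_eq _).mpr
          ⟨w1, w2, w3, w4, ff_congr rfl rfl rfl rfl h0.symm⟩) hxK
      · exact h1
    subst hw5
    set x : G := ff a b c d e w1 w2 w3 w4 1 with hxdef
    set A : Set G := ↑H ∩ ↑(Subgroup.closure {a, b, c, d} : Subgroup G) with hAdef
    have hAsub : A ⊆ {ff a b c d e 0 0 0 0 0, ff a b c d e 1 0 0 0 0,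
        ff a b c d e 0 1 0 0 0, ff a b c d e 1 1 0 0 0} := by
      rintro y ⟨hyH, hyK⟩
      rw [SetLike.mem_coe, P.closure4_eq] at hyK
      obtain ⟨i, j, k, l, rfl⟩ := hyK
      have hcm : x * ff a b c d e i j k l 0 = ff a b c d e i j k l 0 * x :=
        congrArg Subtype.val (hHab ⟨x, hxH⟩ ⟨ff a b c d e i j k l 0, hyH⟩)
      rw [hxdef, P.ffmul, P.ffmul] at hcm
      obtain ⟨h1, h2, -, -, -⟩ := hcomp hcm
      have hk : k = 0 := by linear_combination h1
      have hl : l = 0 := by linear_combination h2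
      subst hk; subst hl
      rcases zmod2_cases i with rfl | rfl <;> rcases zmod2_cases j with rfl | rfl <;> simp
    have hA4 : A.ncard ≤ 4 := by
      refine le_trans (Set.ncard_le_ncard hAsub (Set.toFinite _)) ?_
      have i1 := Set.ncard_insert_le (ff a b c d e 0 0 0 0 0)
        ({ff a b c d e 1 0 0 0 0, ff a b c d e 0 1 0 0 0, ff a b c d e 1 1 0 0 0} : Set G)
      have i2 := Set.ncard_insert_le (ff a b c d e 1 0 0 0 0)
        ({ff a b c d e 0 1 0 0 0, ff a b c d e 1 1 0 0 0} : Set G)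
      have i3 := Set.ncard_insert_le (ff a b c d e 0 1 0 0 0)
        ({ff a b c d e 1 1 0 0 0} : Set G)
      have i4 : ({ff a b c d e 1 1 0 0 0} : Set G).ncard = 1 := Set.ncard_singleton _
      omega
    have hcover : (↑H : Set G) ⊆ A ∪ (fun y => x * y) '' A := by
      intro z hz
      obtain ⟨⟨u1, u2, u3, u4, u5⟩, rfl⟩ := hbij.2 z
      rcases zmod2_cases u5 with h0 | h1
      · exact Or.inl ⟨hz, (P.closure4_eq _).mpr
          ⟨u1, u2, u3, u4, ff_congr rfl rfl rfl rfl h0.symm⟩⟩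
      subst h1
      refine Or.inr ⟨x⁻¹ * ff a b c d e u1 u2 u3 u4 1, ⟨?_, ?_⟩, ?_⟩
      · exact H.mul_mem (H.inv_mem hxH) hz
      · rw [SetLike.mem_coe, P.closure4_eq, hxdef, P.ff_inv, P.ffmul]
        exact ⟨_, _, _, _, ff_congr rfl rfl rfl rfl (by decide)⟩
      · show x * (x⁻¹ * ff a b c d e u1 u2 u3 u4 1) = fful a b c d e (u1, u2, u3, u4, 1)
        simp only [mul_inv_cancel_left]
        rfl
    have h16' : ((↑H : Set G)).ncard = 16 := by
      rw [← Nat.card_coe_set_eq]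
      exact hH16
    have hle1 := Set.ncard_le_ncard hcover (Set.toFinite _)
    have hle2 := Set.ncard_union_le A ((fun y => x * y) '' A)
    have hle3 : ((fun y => x * y) '' A).ncard ≤ A.ncard := Set.ncard_image_le (Set.toFinite A)
    omega
  · subst hH; exact ⟨hKnorm, hKab, hcardK⟩
  · -- the mul equiv
    set φ : Multiplicative (ZMod 2) × Multiplicative (ZMod 2) ×
        Multiplicative (ZMod 2) × Multiplicative (ZMod 2) →* G :=
      { toFun := fun v => ff a b c d e v.1.toAdd v.2.1.toAdd v.2.2.1.toAdd v.2.2.2.toAdd 0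
        map_one' := by
          simp only [Prod.fst_one, Prod.snd_one, toAdd_one]
          exact Pres.ff_one
        map_mul' := by
          intro v w
          simp only [Prod.fst_mul, Prod.snd_mul, toAdd_mul]
          rw [P.ffmul]
          exact (ff_congr (by ring) (by ring) rfl rfl (by ring)).symm } with hφ
    have hφinj : Function.Injective φ := by
      rintro ⟨i, j, k, l⟩ ⟨i', j', k', l'⟩ h
      obtain ⟨h1, h2, h3, h4, -⟩ := hcomp h
      have e1 : i = i' := Multiplicative.toAdd.injective h1
      have e2 : j = j' := Multiplicative.toAdd.injective h2
      have e3 : k = k' := Multiplicative.toAdd.injective h3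
      have e4 : l = l' := Multiplicative.toAdd.injective h4
      subst e1; subst e2; subst e3; subst e4; rfl
    have hrange : Subgroup.closure {a, b, c, d} = φ.range := by
      ext x
      rw [P.closure4_eq, MonoidHom.mem_range]
      constructor
      · rintro ⟨i, j, k, l, rfl⟩
        exact ⟨(Multiplicative.ofAdd i, Multiplicative.ofAdd j,
          Multiplicative.ofAdd k, Multiplicative.ofAdd l), rfl⟩
      · rintro ⟨⟨i, j, k, l⟩, rfl⟩
        exact ⟨i.toAdd, j.toAdd, k.toAdd, l.toAdd, rfl⟩
    exact (MulEquiv.subgroupCongr hrange).trans (MonoidHom.ofInjective hφinj).symm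
end
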